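/- arXiv:math/0605290 — 7 statements merged into one kernel-verified Lean document; each statement's English description precedes it below -/
import Mathlib

section
/- Let X, Y, Z be real Banach spaces and let A : X → Z and B : Y → Z be continuous linear operators. Define A ⊕ B : X × Y → Z by (A ⊕ B)(x, y) = A x + B y. If A is Fredholm and A ⊕ B is surjective, then the restriction Π of the natural projection X × Y → Y to the closed subspace Ker(A ⊕ B) is a Fredholm operator with Index(Π) = Index(A). -/
/-- A continuous linear operator between topological real modules is **Fredholm** if its kernel
is finite-dimensional and its image is closed and of finite codimension. -/
def IsFredholm {E F : Type*} [AddCommGroup E] [Module ℝ E] [TopologicalSpace E]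
    [AddCommGroup F] [Module ℝ F] [TopologicalSpace F] (T : E →L[ℝ] F) : Prop :=
  FiniteDimensional ℝ (LinearMap.ker (T : E →ₗ[ℝ] F)) ∧
    IsClosed ((LinearMap.range (T : E →ₗ[ℝ] F) : Submodule ℝ F) : Set F) ∧
    FiniteDimensional ℝ (F ⧸ LinearMap.range (T : E →ₗ[ℝ] F))

/-- The **index** of a (Fredholm) operator: `dim ker T - dim coker T`. -/
noncomputable def fredholmIndex {E F : Type*} [AddCommGroup E] [Module ℝ E] [TopologicalSpace E]
    [AddCommGroup F] [Module ℝ F] [TopologicalSpace F] (T : E →L[ℝ] F) : ℤ :=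
  (Module.finrank ℝ (LinearMap.ker (T : E →ₗ[ℝ] F)) : ℤ) - (Module.finrank ℝ (F ⧸ LinearMap.range (T : E →ₗ[ℝ] F)) : ℤ)

/-!
`Π` has kernel `ker A × {0}` and range `B⁻¹(range A)`, which is closed because `range A` is.
Since `A ⊕ B` is onto, `B` induces an isomorphism `Y ⧸ B⁻¹(range A) ≃ Z ⧸ range A`, so the
kernels and cokernels of `Π` and `A` have the same dimensions.
-/

namespace LinearMap

variable {R M N P : Type*} [Ring R] [AddCommGroup M] [Module R M] [AddCommGroup N] [Module R N]
  [AddCommGroup P] [Module R P] (f : M →ₗ[R] P) (g : N →ₗ[R] P)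

def kerSndCompKerCoprodEquiv :
    ker ((snd R M N).comp (ker (f.coprod g)).subtype) ≃ₗ[R] ker f where
  toFun p := ⟨(p.1 : M × N).1, by
    have hker : f (p.1 : M × N).1 + g (p.1 : M × N).2 = 0 := p.1.2
    rwa [show (p.1 : M × N).2 = 0 from p.2, map_zero, add_zero] at hker⟩
  map_add' _ _ := rfl
  map_smul' _ _ := rfl
  invFun x := ⟨⟨(x.1, 0), by simp⟩, by simp⟩
  left_inv p := by
    ext
    · rfl
    · exact (p.2 : (p.1 : M × N).2 = 0).symm
  right_inv _ := rfl

theorem range_snd_comp_ker_coprod :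
    range ((snd R M N).comp (ker (f.coprod g)).subtype) = (range f).comap g := by
  ext y
  constructor
  · rintro ⟨⟨⟨x, y⟩, hxy⟩, rfl⟩
    exact ⟨-x, by simpa [neg_eq_iff_add_eq_zero] using hxy⟩
  · rintro ⟨x, hx⟩
    exact ⟨⟨(-x, y), by simp [hx]⟩, rfl⟩

/-- Modulo `range f`, every element of `P` comes from `N` once `f.coprod g` is onto. -/
noncomputable def quotientComapRangeEquivOfSurjectiveCoprod
    (hsurj : Function.Surjective (f.coprod g)) :
    (N ⧸ (range f).comap g) ≃ₗ[R] P ⧸ range f :=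
  have hsurj' : Function.Surjective ((range f).mkQ ∘ₗ g) := by
    intro z
    obtain ⟨z, rfl⟩ := Submodule.mkQ_surjective _ z
    obtain ⟨⟨x, y⟩, rfl⟩ := hsurj z
    refine ⟨y, (Submodule.Quotient.eq _).2 ⟨-x, ?_⟩⟩
    simp
  Submodule.quotEquivOfEq _ _ (by rw [ker_comp, Submodule.ker_mkQ]) ≪≫ₗ
    quotKerEquivOfSurjective _ hsurj'

end LinearMap

theorem fredholm_projection_of_ker_coprod_general
    {X Y Z : Type*} [NormedAddCommGroup X] [NormedSpace ℝ X]
    [NormedAddCommGroup Y] [NormedSpace ℝ Y]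
    [NormedAddCommGroup Z] [NormedSpace ℝ Z]
    (A : X →L[ℝ] Z) (B : Y →L[ℝ] Z)
    (hA : IsFredholm A) (hsurj : Function.Surjective (A.coprod B)) :
    IsFredholm ((ContinuousLinearMap.snd ℝ X Y).comp
        (LinearMap.ker (A.coprod B : X × Y →ₗ[ℝ] Z)).subtypeL) ∧
      fredholmIndex ((ContinuousLinearMap.snd ℝ X Y).comp
        (LinearMap.ker (A.coprod B : X × Y →ₗ[ℝ] Z)).subtypeL) = fredholmIndex A := by
  obtain ⟨hker, hclosed, hcoker⟩ := hA
  have hrange := LinearMap.range_snd_comp_ker_coprod (A : X →ₗ[ℝ] Z) (B : Y →ₗ[ℝ] Z)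
  let eKer := LinearMap.kerSndCompKerCoprodEquiv (A : X →ₗ[ℝ] Z) (B : Y →ₗ[ℝ] Z)
  let eCoker := Submodule.quotEquivOfEq _ _ hrange ≪≫ₗ
    LinearMap.quotientComapRangeEquivOfSurjectiveCoprod _ _ hsurj
  refine ⟨⟨eKer.symm.finiteDimensional, ?_, eCoker.symm.finiteDimensional⟩, ?_⟩
  · exact hrange ▸ hclosed.preimage B.continuous
  · simp only [fredholmIndex]
    rw [← eKer.finrank_eq, ← eCoker.finrank_eq]
    rfl

/-- **Lemma 1.3 (i).** Let `X, Y, Z` be real Banach spaces, `A : X → Z`, `B : Y → Z` continuous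
linear, and `(A ⊕ B)(x, y) = A x + B y`. If `A` is Fredholm and `A ⊕ B` is surjective, then the
restriction `Π` of the projection `X × Y → Y` to `Ker (A ⊕ B)` is Fredholm with
`Index Π = Index A`. -/
theorem fredholm_projection_of_ker_coprod
    {X Y Z : Type*} [NormedAddCommGroup X] [NormedSpace ℝ X] [CompleteSpace X]
    [NormedAddCommGroup Y] [NormedSpace ℝ Y] [CompleteSpace Y]
    [NormedAddCommGroup Z] [NormedSpace ℝ Z] [CompleteSpace Z]
    (A : X →L[ℝ] Z) (B : Y →L[ℝ] Z)
    (hA : IsFredholm A) (hsurj : Function.Surjective (A.coprod B)) :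
    IsFredholm ((ContinuousLinearMap.snd ℝ X Y).comp
        (LinearMap.ker (A.coprod B : X × Y →ₗ[ℝ] Z)).subtypeL) ∧
      fredholmIndex ((ContinuousLinearMap.snd ℝ X Y).comp
        (LinearMap.ker (A.coprod B : X × Y →ₗ[ℝ] Z)).subtypeL) = fredholmIndex A :=
  fredholm_projection_of_ker_coprod_general A B hA hsurj
end

section
/- Let X be a smooth Banach manifold admitting smooth cut-off functions, i.e. for every point x ∈ X and every open neighborhood O of x there is a smooth function β : X → [0,1] equal to 1 on some neighborhood of x and with support contained in O. Let p : E → X be a smooth Banach vector bundle and S : X → E a smooth section whose zero locus Z(S) is compact and such that at every x ∈ Z(S) the vertical differential DS(x) : T_xX → E_x is a Fredholm operator. Then there exist an open neighborhood 𝒪(Z(S)) of Z(S) in X and finitely many smooth sections σ₁, …, σ_m of E such that: (i) DS(y)(T_yX) + span{σ₁(y), …, σ_m(y)} = E_y for every y ∈ Z(S); and (ii) supp(σ_i) ⊆ 𝒪(Z(S)) for i = 1, …, m. -/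
/-!
At a zero `x` of `S` the range of `DS(x)` has finite codimension, so finitely many vectors of the
model fibre complete it. Read in the trivialization at `x` and a fixed chart, the differential of
`S` depends continuously on the base point, and "the range together with a fixed complete subspace
is everything" is an open condition on bounded operators between Banach spaces (open mapping
theorem plus a Neumann-type iteration); so the same vectors complete the range of `DS(y)` for all
`y` near `x`. Cutting off the corresponding constant local sections with a bump function equal to
`1` near `x` gives global smooth sections, and at zeros of `S` a change of trivialization moves both
`DS(y)` and these sections by the same invertible transition map. Compactness of `Z(S)` leaves
finitely many such families.
-/

open Bundle

open Function Set Filter Topology Manifold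

namespace ContinuousLinearMap

variable {𝕜 : Type*} [NontriviallyNormedField 𝕜]
  {E F : Type*} [NormedAddCommGroup E] [NormedSpace 𝕜 E] [NormedAddCommGroup F] [NormedSpace 𝕜 F]

theorem surjective_of_approx_preimage [CompleteSpace E] (f : E →L[𝕜] F) {C : ℝ} (hC : 0 ≤ C)
    (h : ∀ y, ∃ x, ‖y - f x‖ ≤ ‖y‖ / 2 ∧ ‖x‖ ≤ C * ‖y‖) : Surjective f := by
  choose g hg using h
  intro y
  -- the residual `r z` is at most half of `z`, so the corrections `g (r^[m] y)` sum to a preimage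
  set r : F → F := fun z => z - f (g z)
  have hr : ∀ m, ‖r^[m] y‖ ≤ (1 / 2) ^ m * ‖y‖ := by
    intro m
    induction m with
    | zero => simp
    | succ m ih =>
      rw [iterate_succ_apply', pow_succ]
      linarith [(hg (r^[m] y)).1]
  have hu : ∀ m, ‖g (r^[m] y)‖ ≤ C * ‖y‖ * (1 / 2) ^ m := fun m =>
    (hg _).2.trans (by nlinarith [hr m])
  have hsum : Summable fun m => g (r^[m] y) :=
    .of_norm_bounded (summable_geometric_two.mul_left (C * ‖y‖)) hu
  have hpartial : ∀ m, f (∑ i ∈ Finset.range m, g (r^[i] y)) = y - r^[m] y := by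
    intro m
    induction m with
    | zero => simp
    | succ m ih =>
      rw [Finset.sum_range_succ, map_add, ih, iterate_succ_apply']
      simp only [r]
      abel
  have hr0 : Tendsto (fun m => r^[m] y) atTop (𝓝 0) :=
    squeeze_zero_norm hr (by simpa using
      (tendsto_pow_atTop_nhds_zero_of_lt_one (by norm_num : (0 : ℝ) ≤ 1 / 2)
        (by norm_num)).mul_const ‖y‖)
  refine ⟨∑' m, g (r^[m] y), tendsto_nhds_unique
    ((f.continuous.tendsto _).comp hsum.hasSum.tendsto_sum_nat) ?_⟩
  simpa [comp_def, hpartial] using tendsto_const_nhds.sub hr0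

theorem isOpen_setOf_surjective [CompleteSpace E] [CompleteSpace F] :
    IsOpen {f : E →L[𝕜] F | Surjective f} := by
  refine isOpen_iff_mem_nhds.mpr fun f hf => ?_
  obtain ⟨C, hC, hpre⟩ := f.exists_preimage_norm_le hf
  filter_upwards [Metric.ball_mem_nhds f (by positivity : 0 < (2 * C)⁻¹)] with f' hf'
  refine f'.surjective_of_approx_preimage hC.le fun y => ?_
  obtain ⟨x, rfl, hx⟩ := hpre y
  refine ⟨x, ?_, hx⟩
  calc ‖f x - f' x‖ = ‖(f - f') x‖ := rfl
    _ ≤ ‖f - f'‖ * ‖x‖ := (f - f').le_opNorm x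
    _ ≤ (2 * C)⁻¹ * (C * ‖f x‖) := by
        gcongr
        rw [← dist_eq_norm, dist_comm]
        exact (Metric.mem_ball.mp hf').le
    _ = ‖f x‖ / 2 := by field_simp

theorem isOpen_setOf_range_sup_eq_top [CompleteSpace E] [CompleteSpace F] (W : Submodule 𝕜 F)
    [CompleteSpace W] : IsOpen {T : E →L[𝕜] F | LinearMap.range (T : E →ₗ[𝕜] F) ⊔ W = ⊤} := by
  have hcont : Continuous fun T : E →L[𝕜] F => T.coprod W.subtypeL :=
    (coprodEquivL 𝕜).continuous.comp (continuous_id.prodMk continuous_const)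
  convert isOpen_setOf_surjective.preimage hcont
  ext T
  change LinearMap.range (T : E →ₗ[𝕜] F) ⊔ W = ⊤ ↔ Surjective (T.coprod W.subtypeL)
  rw [← coe_coe, ← LinearMap.range_eq_top, coe_coprod, LinearMap.range_coprod,
    Submodule.toLinearMap_subtypeL, Submodule.range_subtype]

end ContinuousLinearMap

theorem Submodule.exists_finite_sup_span_eq_top {R M : Type*} [Ring R] [AddCommGroup M]
    [Module R M] (p : Submodule R M) [hp : Module.Finite R (M ⧸ p)] :
    ∃ s : Set M, s.Finite ∧ p ⊔ span R s = ⊤ := by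
  obtain ⟨t, ht, hspan⟩ := fg_def.mp (Module.Finite.fg_top (R := R) (M := M ⧸ p))
  refine ⟨surjInv p.mkQ_surjective '' t, ht.image _, (p.map_mkQ_eq_top _).mp ?_⟩
  rw [map_span, image_image]
  simpa only [surjInv_eq p.mkQ_surjective, image_id'] using hspan

section Differential

variable {𝕜 : Type*} [NontriviallyNormedField 𝕜]
  {EM : Type*} [NormedAddCommGroup EM] [NormedSpace 𝕜 EM] {H : Type*} [TopologicalSpace H]
  {I : ModelWithCorners 𝕜 EM H} {M : Type*} [TopologicalSpace M] [ChartedSpace H M]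
  {F : Type*} [NormedAddCommGroup F] [NormedSpace 𝕜 F]

theorem mfderiv_clm_apply_of_eq_zero {F' : Type*} [NormedAddCommGroup F'] [NormedSpace 𝕜 F']
    {A : M → F →L[𝕜] F'} {f : M → F} {x : M}
    (hA : MDifferentiableAt I 𝓘(𝕜, F →L[𝕜] F') A x) (hf : MDifferentiableAt I 𝓘(𝕜, F) f x)
    (hfx : f x = 0) :
    mfderiv I 𝓘(𝕜, F') (fun y => A y (f y)) x = (A x).comp (mfderiv I 𝓘(𝕜, F) f x) := by
  have happly := (isBoundedBilinearMap_apply (𝕜 := 𝕜) (E := F) (F := F')).hasFDerivAt (A x, f x)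
  refine ((hasMFDerivAt_iff_hasFDerivAt.mpr happly).comp x
    (hA.hasMFDerivAt.prodMk hf.hasMFDerivAt)).mfderiv.trans ?_
  ext v
  change A x (mfderiv I 𝓘(𝕜, F) f x v) +
    (show F →L[𝕜] F' from mfderiv I 𝓘(𝕜, F →L[𝕜] F') A x v) (f x) = _
  rw [hfx, map_zero, add_zero]
  rfl

variable {E : M → Type*} [∀ x, TopologicalSpace (E x)] [∀ x, AddCommGroup (E x)]
  [∀ x, Module 𝕜 (E x)] [TopologicalSpace (TotalSpace F E)] [FiberBundle F E] [VectorBundle 𝕜 F E]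

theorem Bundle.Trivialization.mfderiv_snd_eq_coordChangeL_comp_of_eq_zero
    [ContMDiffVectorBundle 1 F E I]
    {e e' : Trivialization F (π F E)} [MemTrivializationAtlas e] [MemTrivializationAtlas e']
    {s : ∀ x, E x} {y : M} (hy : y ∈ e.baseSet ∩ e'.baseSet)
    (hs : MDifferentiableAt I (I.prod 𝓘(𝕜, F)) (fun x => TotalSpace.mk' F x (s x)) y)
    (hsy : s y = 0) :
    mfderiv I 𝓘(𝕜, F) (fun x => (e' (TotalSpace.mk' F x (s x))).2) y =
      (e.coordChangeL 𝕜 e' y : F →L[𝕜] F).comp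
        (mfderiv I 𝓘(𝕜, F) (fun x => (e (TotalSpace.mk' F x (s x))).2) y) := by
  have hchange : (fun x => (e' (TotalSpace.mk' F x (s x))).2) =ᶠ[𝓝 y]
      fun x => (e.coordChangeL 𝕜 e' x : F →L[𝕜] F) (e (TotalSpace.mk' F x (s x))).2 := by
    filter_upwards [(e.open_baseSet.inter e'.open_baseSet).mem_nhds hy] with x hx
    rw [ContinuousLinearEquiv.coe_coe, e.coordChangeL_apply e' hx, e.symm_apply_apply_mk hx.1]
  rw [hchange.mfderiv_eq]
  refine mfderiv_clm_apply_of_eq_zero (mdifferentiableAt_coordChangeL hy.1 hy.2)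
    ((e.mdifferentiableAt_section_iff I s hy.1).mp hs) ?_
  rw [hsy]
  exact (e.linear 𝕜 hy.1).map_zero

theorem Bundle.Trivialization.contMDiff_smul_symm {n : WithTop ℕ∞} [ContMDiffVectorBundle n F E I]
    (e : Trivialization F (π F E)) [MemTrivializationAtlas e] {β : M → 𝕜}
    (hβ : ContMDiff I 𝓘(𝕜) n β) (hsupp : tsupport β ⊆ e.baseSet) (v : F) :
    ContMDiff I (I.prod 𝓘(𝕜, F)) n fun x => TotalSpace.mk' F x (β x • e.symm x v) :=
  hβ.contMDiffOn.smul_section_of_tsupport e.open_baseSet hsupp <|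
    e.contMDiffOn_section_baseSet_iff.mpr <| (contMDiffOn_const (c := v)).congr fun x hx => by
      simp only [e.apply_mk_symm hx]

end Differential

section ModelSpace

variable {𝕜 : Type*} [NontriviallyNormedField 𝕜]
  {B : Type*} [NormedAddCommGroup B] [NormedSpace 𝕜 B]
  {M : Type*} [TopologicalSpace M] [ChartedSpace B M]
  {F : Type*} [NormedAddCommGroup F] [NormedSpace 𝕜 F]

theorem exists_continuousAt_eventually_range_mfderiv_eq [IsManifold 𝓘(𝕜, B) 1 M]
    {f : M → F} {U : Set M} {x : M}
    (hU : IsOpen U) (hxU : x ∈ U) (hf : ContMDiffOn 𝓘(𝕜, B) 𝓘(𝕜, F) 1 f U) :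
    ∃ Φ : M → B →L[𝕜] F, ContinuousAt Φ x ∧ ∀ᶠ y in 𝓝 x,
      LinearMap.range (ContinuousLinearMap.toLinearMap (M₂ := F) (mfderiv 𝓘(𝕜, B) 𝓘(𝕜, F) f y) :
        TangentSpace 𝓘(𝕜, B) y →ₗ[𝕜] F) =
        LinearMap.range (Φ y : B →ₗ[𝕜] F) := by
  set ψ := extChartAt 𝓘(𝕜, B) x
  set V := ψ.target ∩ ψ.symm ⁻¹' U
  have hV : IsOpen V := (continuousOn_extChartAt_symm x).isOpen_inter_preimage
    (isOpen_extChartAt_target x) hU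
  have hψV : ∀ y ∈ ψ.source ∩ U, ψ y ∈ V := fun y hy =>
    ⟨ψ.map_source hy.1, by rw [mem_preimage, ψ.left_inv hy.1]; exact hy.2⟩
  have hG : ContDiffOn 𝕜 1 (f ∘ ψ.symm) V := contMDiffOn_iff_contDiffOn.mp <|
    hf.comp ((contMDiffOn_extChartAt_symm x).mono inter_subset_left) fun _ hb => hb.2
  -- `f` read in the chart at `x`; its derivative differs from `mfderiv f y` by the invertible
  -- derivative of that chart
  refine ⟨fun y => fderiv 𝕜 (f ∘ ψ.symm) (ψ y), ?_, ?_⟩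
  · exact ((hG.continuousOn_fderiv_of_isOpen hV le_rfl).continuousAt
      (hV.mem_nhds (hψV x ⟨mem_extChartAt_source x, hxU⟩))).comp (continuousAt_extChartAt x)
  filter_upwards [((isOpen_extChartAt_source (I := 𝓘(𝕜, B)) x).inter hU).mem_nhds
    ⟨mem_extChartAt_source x, hxU⟩] with y hy
  have hfG : f =ᶠ[𝓝 y] (f ∘ ψ.symm) ∘ ψ := by
    filter_upwards [(isOpen_extChartAt_source (I := 𝓘(𝕜, B)) x).mem_nhds hy.1] with z hz
    simp only [comp_apply, ψ.left_inv hz]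
  have hGy : MDifferentiableAt 𝓘(𝕜, B) 𝓘(𝕜, F) (f ∘ ψ.symm) (ψ y) :=
    ((hG.contDiffAt (hV.mem_nhds (hψV y hy))).differentiableAt one_ne_zero).mdifferentiableAt
  rw [hfG.mfderiv_eq, mfderiv_comp y hGy (mdifferentiableAt_extChartAt
    (extChartAt_source (I := 𝓘(𝕜, B)) x ▸ hy.1)), mfderiv_eq_fderiv]
  exact LinearMap.range_comp_of_range_eq_top _
    (LinearMap.range_eq_top.mpr (isInvertible_mfderiv_extChartAt hy.1).surjective)

theorem eventually_range_mfderiv_sup_eq_top [IsManifold 𝓘(𝕜, B) 1 M] [CompleteSpace B]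
    [CompleteSpace F] {f : M → F} {U : Set M} {x : M}
    (hU : IsOpen U) (hxU : x ∈ U) (hf : ContMDiffOn 𝓘(𝕜, B) 𝓘(𝕜, F) 1 f U)
    {W : Submodule 𝕜 F} [CompleteSpace W]
    (hx : LinearMap.range (ContinuousLinearMap.toLinearMap (M₂ := F)
      (mfderiv 𝓘(𝕜, B) 𝓘(𝕜, F) f x) : TangentSpace 𝓘(𝕜, B) x →ₗ[𝕜] F) ⊔ W = ⊤) :
    ∀ᶠ y in 𝓝 x, LinearMap.range (ContinuousLinearMap.toLinearMap (M₂ := F)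
      (mfderiv 𝓘(𝕜, B) 𝓘(𝕜, F) f y) : TangentSpace 𝓘(𝕜, B) y →ₗ[𝕜] F) ⊔ W = ⊤ := by
  obtain ⟨Φ, hΦ, hrange⟩ := exists_continuousAt_eventually_range_mfderiv_eq hU hxU hf
  have hΦx : Φ x ∈ {T : B →L[𝕜] F | LinearMap.range (T : B →ₗ[𝕜] F) ⊔ W = ⊤} := by
    rwa [mem_ofPred_eq, ← hrange.self_of_nhds]
  filter_upwards [hrange, hΦ.preimage_mem_nhds
    ((ContinuousLinearMap.isOpen_setOf_range_sup_eq_top W).mem_nhds hΦx)] with y hy hΦy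
  rwa [hy]

end ModelSpace

section SpanningSections

variable {B : Type*} [NormedAddCommGroup B] [NormedSpace ℝ B]
  {X : Type*} [TopologicalSpace X] [ChartedSpace B X]
  {F : Type*} [NormedAddCommGroup F] [NormedSpace ℝ F]
  {E : X → Type*} [∀ x, TopologicalSpace (E x)] [TopologicalSpace (TotalSpace F E)]
  [FiberBundle F E]

variable (B F) in
/-- `DS(y)(T_yX) + span {σ(y) | σ ∈ 𝒮} = E_y`, read in the trivialization at `y`. -/
def SpansCokernel (S : ∀ x, E x) (𝒮 : Set (∀ x, E x)) (y : X) : Prop :=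
  LinearMap.range (ContinuousLinearMap.toLinearMap (M₂ := F)
      (mfderiv 𝓘(ℝ, B) 𝓘(ℝ, F) (fun z => (trivializationAt F E y (TotalSpace.mk' F z (S z))).2) y) :
        TangentSpace 𝓘(ℝ, B) y →ₗ[ℝ] F) ⊔
    Submodule.span ℝ
      ((fun σ : ∀ x, E x => (trivializationAt F E y (TotalSpace.mk' F y (σ y))).2) '' 𝒮) = ⊤

theorem SpansCokernel.mono {S : ∀ x, E x} {𝒮 𝒮' : Set (∀ x, E x)} {y : X}
    (h : SpansCokernel B F S 𝒮 y) (h𝒮 : 𝒮 ⊆ 𝒮') : SpansCokernel B F S 𝒮' y :=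
  top_le_iff.mp <| h ▸ sup_le_sup_left (Submodule.span_mono (image_mono h𝒮)) _

variable [∀ x, AddCommGroup (E x)] [∀ x, Module ℝ (E x)] [VectorBundle ℝ F E]
  [IsManifold 𝓘(ℝ, B) 1 X] [CompleteSpace B] [CompleteSpace F]
  [ContMDiffVectorBundle 1 F E 𝓘(ℝ, B)] {n : WithTop ℕ∞} [ContMDiffVectorBundle n F E 𝓘(ℝ, B)]

theorem exists_finite_sections_eventually_spansCokernel
    (hcut : ∀ (x : X) (O : Set X), IsOpen O → x ∈ O → ∃ β : X → ℝ,
      ContMDiff 𝓘(ℝ, B) 𝓘(ℝ) n β ∧ (∀ᶠ y in 𝓝 x, β y = 1) ∧ tsupport β ⊆ O)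
    {S : ∀ x, E x}
    (hS : ContMDiff 𝓘(ℝ, B) (𝓘(ℝ, B).prod 𝓘(ℝ, F)) 1 fun x => TotalSpace.mk' F x (S x))
    {x : X} (hcodim : FiniteDimensional ℝ (F ⧸ LinearMap.range (ContinuousLinearMap.toLinearMap
      (M₂ := F) (mfderiv 𝓘(ℝ, B) 𝓘(ℝ, F)
        (fun z => (trivializationAt F E x (TotalSpace.mk' F z (S z))).2) x) :
          TangentSpace 𝓘(ℝ, B) x →ₗ[ℝ] F)))
    {O : Set X} (hO : IsOpen O) (hxO : x ∈ O) :
    ∃ 𝒮 : Set (∀ x, E x), 𝒮.Finite ∧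
      (∀ σ ∈ 𝒮, ContMDiff 𝓘(ℝ, B) (𝓘(ℝ, B).prod 𝓘(ℝ, F)) n fun x => TotalSpace.mk' F x (σ x)) ∧
      (∀ σ ∈ 𝒮, closure {x | σ x ≠ 0} ⊆ O) ∧ ∀ᶠ y in 𝓝 x, S y = 0 → SpansCokernel B F S 𝒮 y := by
  set e := trivializationAt F E x
  have hxe : x ∈ e.baseSet := FiberBundle.mem_baseSet_trivializationAt' x
  obtain ⟨V, hV, hVx⟩ := Submodule.exists_finite_sup_span_eq_top _ (hp := hcodim)
  have : FiniteDimensional ℝ (Submodule.span ℝ V) := FiniteDimensional.span_of_finite ℝ hV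
  have := FiniteDimensional.complete ℝ (Submodule.span ℝ V)
  have hnear := eventually_range_mfderiv_sup_eq_top e.open_baseSet hxe
    (e.contMDiffOn_section_baseSet_iff.mp hS.contMDiffOn) hVx
  obtain ⟨β, hβ, hβ1, hβO⟩ := hcut x (O ∩ e.baseSet) (hO.inter e.open_baseSet) ⟨hxO, hxe⟩
  set σ : F → ∀ x, E x := fun v y => β y • e.symm y v
  refine ⟨σ '' V, hV.image σ, ?_, ?_, ?_⟩
  · rintro _ ⟨v, -, rfl⟩
    exact e.contMDiff_smul_symm hβ (hβO.trans inter_subset_right) v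
  · rintro _ ⟨v, -, rfl⟩
    refine (closure_mono fun y hy => ?_).trans (hβO.trans inter_subset_left)
    exact fun hβy => hy (by simp [σ, hβy])
  filter_upwards [hnear, hβ1, e.open_baseSet.mem_nhds hxe] with y hy hβy hye hSy
  have hye' : y ∈ (trivializationAt F E y).baseSet := FiberBundle.mem_baseSet_trivializationAt' y
  set g := e.coordChangeL ℝ (trivializationAt F E y) y
  have hσy : (fun σ : ∀ x, E x => (trivializationAt F E y (TotalSpace.mk' F y (σ y))).2) '' (σ '' V)
      = (g : F →ₗ[ℝ] F) '' V := by
    rw [image_image]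
    refine image_congr fun v _ => ?_
    simp [σ, hβy, g, e.coordChangeL_apply _ ⟨hye, hye'⟩]
  have hmap := congrArg (Submodule.map (g : F →ₗ[ℝ] F)) hy
  rw [Submodule.map_sup, Submodule.map_span, Submodule.map_top,
    LinearMap.range_eq_top.mpr g.surjective, ← LinearMap.range_comp] at hmap
  rw [SpansCokernel, e.mfderiv_snd_eq_coordChangeL_comp_of_eq_zero ⟨hye, hye'⟩
    (hS.mdifferentiableAt one_ne_zero) hSy, hσy]
  exact hmap

theorem exists_finite_sections_spansCokernel
    (hcut : ∀ (x : X) (O : Set X), IsOpen O → x ∈ O → ∃ β : X → ℝ,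
      ContMDiff 𝓘(ℝ, B) 𝓘(ℝ) n β ∧ (∀ᶠ y in 𝓝 x, β y = 1) ∧ tsupport β ⊆ O)
    {S : ∀ x, E x}
    (hS : ContMDiff 𝓘(ℝ, B) (𝓘(ℝ, B).prod 𝓘(ℝ, F)) 1 fun x => TotalSpace.mk' F x (S x))
    (hcpt : IsCompact {x | S x = 0})
    (hcodim : ∀ x, S x = 0 → FiniteDimensional ℝ (F ⧸ LinearMap.range
      (ContinuousLinearMap.toLinearMap (M₂ := F) (mfderiv 𝓘(ℝ, B) 𝓘(ℝ, F)
        (fun z => (trivializationAt F E x (TotalSpace.mk' F z (S z))).2) x) :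
          TangentSpace 𝓘(ℝ, B) x →ₗ[ℝ] F)))
    {𝒪 : Set X} (h𝒪 : IsOpen 𝒪) (hZ𝒪 : {x | S x = 0} ⊆ 𝒪) :
    ∃ 𝒮 : Set (∀ x, E x), 𝒮.Finite ∧
      (∀ σ ∈ 𝒮, ContMDiff 𝓘(ℝ, B) (𝓘(ℝ, B).prod 𝓘(ℝ, F)) n fun x => TotalSpace.mk' F x (σ x)) ∧
      (∀ σ ∈ 𝒮, closure {x | σ x ≠ 0} ⊆ 𝒪) ∧ ∀ y, S y = 0 → SpansCokernel B F S 𝒮 y := by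
  choose! 𝒮 hfin hsmooth hsupp hspan using fun x (hx : S x = 0) =>
    exists_finite_sections_eventually_spansCokernel hcut hS (hcodim x hx) h𝒪 (hZ𝒪 hx)
  obtain ⟨t, htZ, hcover⟩ := hcpt.elim_nhds_subcover _ hspan
  refine ⟨⋃ x ∈ t, 𝒮 x, t.finite_toSet.biUnion fun x hx => hfin x (htZ x hx), ?_, ?_, ?_⟩
  · simp only [mem_iUnion]
    rintro σ ⟨x, hx, hσ⟩
    exact hsmooth x (htZ x hx) σ hσ
  · simp only [mem_iUnion]
    rintro σ ⟨x, hx, hσ⟩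
    exact hsupp x (htZ x hx) σ hσ
  · intro y hy
    obtain ⟨x, hx, hyx⟩ := mem_iUnion₂.mp (hcover hy)
    exact (hyx hy).mono (subset_biUnion_of_mem (u := 𝒮) (Finset.mem_coe.mpr hx))

end SpanningSections

/-- **Lemma 1.4.** Let `X` be a smooth Banach manifold admitting smooth cut-off functions and
`E → X` a smooth Banach vector bundle. Let `S` be a smooth section with compact zero locus
`Z(S)` whose vertical differential `DS(x)` is Fredholm at every `x ∈ Z(S)`. Then there exist an
open neighborhood `𝒪` of `Z(S)` and finitely many smooth sections `σ₁, …, σ_m` of `E` such that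
(i) `DS(y)(T_yX) + span {σ₁(y), …, σ_m(y)} = E_y` for every `y ∈ Z(S)` (expressed in the
trivialization at `y`), and (ii) `supp σᵢ ⊆ 𝒪` for every `i`. -/
theorem exists_finitely_many_spanning_sections
    {B : Type*} [NormedAddCommGroup B] [NormedSpace ℝ B] [CompleteSpace B]
    {X : Type*} [TopologicalSpace X] [ChartedSpace B X]
    [IsManifold (modelWithCornersSelf ℝ B) ((⊤ : ℕ∞) : WithTop ℕ∞) X]
    {F : Type*} [NormedAddCommGroup F] [NormedSpace ℝ F] [CompleteSpace F]
    (E : X → Type*) [∀ x, TopologicalSpace (E x)] [∀ x, AddCommGroup (E x)]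
    [∀ x, Module ℝ (E x)]
    [TopologicalSpace (TotalSpace F E)] [FiberBundle F E] [VectorBundle ℝ F E]
    [ContMDiffVectorBundle ((⊤ : ℕ∞) : WithTop ℕ∞) F E (modelWithCornersSelf ℝ B)]
    (hcut : ∀ (x : X) (O : Set X), IsOpen O → x ∈ O →
      ∃ β : X → ℝ, ContMDiff (modelWithCornersSelf ℝ B) (modelWithCornersSelf ℝ ℝ) (⊤ : ℕ∞) β ∧
        (∀ y, β y ∈ Set.Icc (0 : ℝ) 1) ∧ (∀ᶠ y in nhds x, β y = 1) ∧ tsupport β ⊆ O)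
    (S : ∀ x, E x)
    (hS : ContMDiff (modelWithCornersSelf ℝ B)
      ((modelWithCornersSelf ℝ B).prod (modelWithCornersSelf ℝ F)) (⊤ : ℕ∞)
      fun x => TotalSpace.mk' F x (S x))
    (hcpt : IsCompact {x | S x = 0})
    (hFred : ∀ x, S x = 0 →
      IsFredholm (mfderiv (modelWithCornersSelf ℝ B) (modelWithCornersSelf ℝ F)
        (fun y => (trivializationAt F E x (TotalSpace.mk' F y (S y))).2) x)) :
    ∃ (𝒪 : Set X) (m : ℕ) (σ : Fin m → ∀ x, E x),
      IsOpen 𝒪 ∧ {x | S x = 0} ⊆ 𝒪 ∧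
      (∀ i, ContMDiff (modelWithCornersSelf ℝ B)
        ((modelWithCornersSelf ℝ B).prod (modelWithCornersSelf ℝ F)) (⊤ : ℕ∞)
        fun x => TotalSpace.mk' F x (σ i x)) ∧
      (∀ i, closure {x | σ i x ≠ 0} ⊆ 𝒪) ∧
      ∀ y, S y = 0 →
        LinearMap.range ((ContinuousLinearMap.toLinearMap (M₂ := F)
            (mfderiv (modelWithCornersSelf ℝ B) (modelWithCornersSelf ℝ F)
            (fun z => (trivializationAt F E y (TotalSpace.mk' F z (S z))).2) y) :
              TangentSpace (modelWithCornersSelf ℝ B) y →ₗ[ℝ] F)) ⊔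
          Submodule.span ℝ
            (Set.range fun i => (trivializationAt F E y (TotalSpace.mk' F y (σ i y))).2) = ⊤ := by
  obtain ⟨𝒮, hfin, hsmooth, hsupp, hspan⟩ := exists_finite_sections_spansCokernel
    (fun x O hO hx => (hcut x O hO hx).imp fun β hβ => ⟨hβ.1, hβ.2.2⟩)
    (hS.of_le (by exact_mod_cast le_top)) hcpt (fun x hx => (hFred x hx).2.2) isOpen_univ
    (subset_univ _)
  obtain ⟨m, σ, -, rfl⟩ := hfin.fin_param
  refine ⟨univ, m, σ, isOpen_univ, subset_univ _, fun i => hsmooth _ (mem_range_self i),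
    fun i => hsupp _ (mem_range_self i), fun y hy => ?_⟩
  have := hspan y hy
  rwa [SpansCokernel, ← range_comp] at this
end

section
/- For i = 1, …, k let Γᵢ be a finite group acting continuously on a Hausdorff topological space W̃ᵢ, and let πᵢ : W̃ᵢ → X be a continuous open map into a topological space X that is Γᵢ-invariant and whose fibers are exactly the Γᵢ-orbits. Set Wᵢ = πᵢ(W̃ᵢ) and W_I = ∩ᵢ₌₁ᵏ Wᵢ, and assume W_I ≠ ∅ and that for each i the free-point set W̃ᵢ° is dense in W̃ᵢ. Then the component-wise action of Γ_I = Γ₁ × ⋯ × Γ_k on the fiber product W̃_I = {(w₁, …, w_k) ∈ ∏ᵢ W̃ᵢ : π₁(w₁) = ⋯ = π_k(w_k)} is effective: for every φ = (φ₁, …, φ_k) ∈ Γ_I with φ ≠ 1 there exists a point w ∈ W̃_I with φ·w ≠ w. -/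
/-- **Claim 2.16.** For `i = 1, …, k` let a finite group `Γᵢ` act continuously on a Hausdorff
space `Wᵢ`, and let `πᵢ : Wᵢ → X` be a continuous, open, `Γᵢ`-invariant map whose fibers are
exactly the `Γᵢ`-orbits. Assume `W_I = ⋂ᵢ πᵢ(Wᵢ)` is nonempty and that the free points of each
action are dense. Then the componentwise action of `Γ₁ × ⋯ × Γ_k` on the fiber product
`{w : ∀ i, Wᵢ | π₁(w₁) = ⋯ = π_k(w_k)}` is effective. -/
theorem effective_action_on_fiber_product
    {k : ℕ} {X : Type*} [TopologicalSpace X]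
    (W : Fin k → Type*) [∀ i, TopologicalSpace (W i)] [∀ i, T2Space (W i)]
    (Γ : Fin k → Type*) [∀ i, Group (Γ i)] [∀ i, Finite (Γ i)]
    [∀ i, MulAction (Γ i) (W i)] [∀ i, ContinuousConstSMul (Γ i) (W i)]
    (π : ∀ i, W i → X) (hcont : ∀ i, Continuous (π i)) (hopen : ∀ i, IsOpenMap (π i))
    (hinv : ∀ i (g : Γ i) (w : W i), π i (g • w) = π i w)
    (hfib : ∀ i (w w' : W i), π i w = π i w' ↔ ∃ g : Γ i, g • w' = w)
    (hne : (⋂ i, Set.range (π i)).Nonempty)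
    (hdense : ∀ i, Dense {w : W i | ∀ g : Γ i, g • w = w → g = 1}) :
    ∀ φ : ∀ i, Γ i, φ ≠ 1 →
      ∃ w : ∀ i, W i, (∀ i j, π i (w i) = π j (w j)) ∧ ∃ i, φ i • w i ≠ w i := by

  classical
  intro φ hφ
  obtain ⟨i₀, hi₀⟩ : ∃ i, φ i ≠ 1 := by
    by_contra h
    push_neg at h
    exact hφ (funext fun i => h i)
  have hIopen : IsOpen (⋂ i, Set.range (π i)) :=
    isOpen_iInter_of_finite fun i => (hopen i).isOpen_range
  obtain ⟨x, hx⟩ := hne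
  obtain ⟨w0, hw0⟩ := Set.mem_iInter.mp hx i₀
  have hU : IsOpen ((π i₀) ⁻¹' (⋂ i, Set.range (π i))) := hIopen.preimage (hcont i₀)
  have hUne : ((π i₀) ⁻¹' (⋂ i, Set.range (π i))).Nonempty := ⟨w0, by simp [hw0, hx]⟩
  obtain ⟨w', hw'free, hw'U⟩ := (hdense i₀).exists_mem_open hU hUne
  have hch : ∀ j, ∃ v : W j, π j v = π i₀ w' := by
    intro j
    have h1 : π i₀ w' ∈ ⋂ i, Set.range (π i) := hw'U
    exact Set.mem_iInter.mp h1 j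
  choose w hw using hch
  refine ⟨w, fun i j => by rw [hw i, hw j], i₀, ?_⟩
  obtain ⟨g, hg⟩ := (hfib i₀ (w i₀) w').mp (hw i₀)
  intro hfix
  apply hi₀
  have hconj : (g⁻¹ * φ i₀ * g) • w' = w' := by
    rw [mul_smul, mul_smul, hg, hfix, ← hg, inv_smul_smul]
  have h1 : g⁻¹ * φ i₀ * g = 1 := hw'free _ hconj
  have : φ i₀ = g * (g⁻¹ * φ i₀ * g) * g⁻¹ := by group
  rw [this, h1]
  group
end

section
/- For i = 1, …, k let Γᵢ be a finite group acting continuously on a Hausdorff topological space W̃ᵢ, and let πᵢ : W̃ᵢ → X be a continuous open map into a topological space X that is Γᵢ-invariant and whose fibers are exactly the Γᵢ-orbits; set Wᵢ = πᵢ(W̃ᵢ) and W_I = ∩ᵢ₌₁ᵏ Wᵢ. Then the projection π_I : W̃_I → X, (w₁, …, w_k) ↦ π₁(w₁), on the fiber product W̃_I is a continuous, open, Γ_I-invariant map with image W_I whose fibers are exactly the Γ_I-orbits; consequently π_I induces a homeomorphism from the orbit space W̃_I/Γ_I onto W_I. Moreover, for every u ∈ W_I such that every point of the fiber π_I⁻¹(u)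 has trivial Γ_I-stabilizer, the fiber π_I⁻¹(u) has exactly |Γ₁|·…·|Γ_k| = |Γ_I| elements. -/
/-- The fiber product of the family of maps `π i : W i → X`. -/
abbrev FiberProd {ι X : Type*} (W : ι → Type*) (π : ∀ i, W i → X) : Type _ :=
  { w : ∀ i, W i // ∀ i j, π i (w i) = π j (w j) }

/-- **Proposition 2.18 (iii)–(iv).** For `i ∈ ι` (finite) let a finite group `Γᵢ` act
continuously on a Hausdorff space `Wᵢ`, and let `πᵢ : Wᵢ → X` be a continuous, open,
`Γᵢ`-invariant map whose fibers are exactly the `Γᵢ`-orbits. Then the projection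
`π_I : W̃_I → X` on the fiber product is continuous, open, with image `⋂ᵢ range πᵢ` and with
fibers exactly the `Γ_I = ∏ᵢ Γᵢ`-orbits (hence it induces a homeomorphism `W̃_I/Γ_I ≅ W_I`);
moreover over any point all of whose fiber elements have trivial `Γ_I`-stabilizer, the fiber of
`π_I` has exactly `∏ᵢ |Γᵢ| = |Γ_I|` elements. -/
theorem fiber_product_projection_properties
    {ι : Type*} [Fintype ι] {X : Type*} [TopologicalSpace X]
    (W : ι → Type*) [∀ i, TopologicalSpace (W i)] [∀ i, T2Space (W i)]
    (Γ : ι → Type*) [∀ i, Group (Γ i)] [∀ i, Finite (Γ i)]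
    [∀ i, MulAction (Γ i) (W i)] [∀ i, ContinuousConstSMul (Γ i) (W i)]
    (π : ∀ i, W i → X) (hcont : ∀ i, Continuous (π i)) (hopen : ∀ i, IsOpenMap (π i))
    (hinv : ∀ i (g : Γ i) (w : W i), π i (g • w) = π i w)
    (hfib : ∀ i (w w' : W i), π i w = π i w' ↔ ∃ g : Γ i, g • w' = w)
    (i₀ : ι) :
    Continuous (fun w : FiberProd W π => π i₀ (w.1 i₀)) ∧
      IsOpenMap (fun w : FiberProd W π => π i₀ (w.1 i₀)) ∧
      (Set.range (fun w : FiberProd W π => π i₀ (w.1 i₀)) = ⋂ i, Set.range (π i)) ∧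
      (∀ w w' : FiberProd W π,
        π i₀ (w.1 i₀) = π i₀ (w'.1 i₀) ↔ ∃ φ : ∀ i, Γ i, ∀ i, φ i • w'.1 i = w.1 i) ∧
      ∀ u ∈ ⋂ i, Set.range (π i),
        (∀ w : FiberProd W π, π i₀ (w.1 i₀) = u →
          ∀ φ : ∀ i, Γ i, (∀ i, φ i • w.1 i = w.1 i) → φ = 1) →
        Nat.card { w : FiberProd W π // π i₀ (w.1 i₀) = u } = ∏ i, Nat.card (Γ i) := by

  classical
  have hcontI : Continuous (fun w : FiberProd W π => π i₀ (w.1 i₀)) :=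
    (hcont i₀).comp ((continuous_apply i₀).comp continuous_subtype_val)
  refine ⟨hcontI, ?_, ?_, ?_, ?_⟩
  · -- openness
    intro U hU
    rw [isOpen_induced_iff] at hU
    obtain ⟨V, hV, rfl⟩ := hU
    rw [isOpen_iff_forall_mem_open]
    rintro x ⟨w, hwV, rfl⟩
    rw [isOpen_pi_iff] at hV
    obtain ⟨I, u, h1, h2⟩ := hV w.1 hwV
    set u' : ∀ i, Set (W i) := fun i => if i ∈ I then u i else Set.univ with hu'
    refine ⟨⋂ i, π i '' u' i, ?_, ?_, ?_⟩
    · rintro y hy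
      have hy' := Set.mem_iInter.1 hy
      choose v hv hpv using hy'
      refine ⟨⟨v, fun i j => (hpv i).trans (hpv j).symm⟩, ?_, hpv i₀⟩
      refine h2 ?_
      intro i hi
      have h3 : u' i = u i := if_pos hi
      have h4 := hv i
      rwa [h3] at h4
    · exact isOpen_iInter_of_finite fun i => by
        by_cases hi : i ∈ I
        · simpa [hu', hi] using hopen i _ (h1 i hi).1
        · simpa [hu', hi] using hopen i _ isOpen_univ
    · refine Set.mem_iInter.2 fun i => ⟨w.1 i, ?_, w.2 i i₀⟩
      by_cases hi : i ∈ I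
      · simpa [hu', hi] using (h1 i hi).2
      · simp [hu', hi]
  · -- range
    ext x
    simp only [Set.mem_range, Set.mem_iInter]
    constructor
    · rintro ⟨w, rfl⟩ i
      exact ⟨w.1 i, w.2 i i₀⟩
    · intro h
      choose v hpv using h
      exact ⟨⟨v, fun i j => (hpv i).trans (hpv j).symm⟩, hpv i₀⟩
  · -- fibers
    intro w w'
    constructor
    · intro h
      have hi : ∀ i, π i (w.1 i) = π i (w'.1 i) := fun i =>
        (w.2 i i₀).trans (h.trans (w'.2 i₀ i))
      choose φ hφ using fun i => (hfib i _ _).1 (hi i)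
      exact ⟨φ, hφ⟩
    · rintro ⟨φ, hφ⟩
      calc π i₀ (w.1 i₀) = π i₀ (φ i₀ • w'.1 i₀) := by rw [hφ i₀]
        _ = π i₀ (w'.1 i₀) := hinv _ _ _
  · -- counting
    intro u hu hfree
    have hu' := Set.mem_iInter.1 hu
    choose v hpv using fun i => hu' i
    have hcompat : ∀ (φ : ∀ i, Γ i) i j, π i (φ i • v i) = π j (φ j • v j) := by
      intro φ i j
      rw [hinv, hinv, hpv, hpv]
    set w₀ : FiberProd W π := ⟨v, fun i j => (hpv i).trans (hpv j).symm⟩ with hw₀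
    let e : (∀ i, Γ i) → { w : FiberProd W π // π i₀ (w.1 i₀) = u } := fun φ =>
      ⟨⟨fun i => φ i • v i, hcompat φ⟩, by simpa using (hinv i₀ (φ i₀) (v i₀)).trans (hpv i₀)⟩
    have hbij : Function.Bijective e := by
      constructor
      · intro φ ψ h
        have hc : ∀ i, φ i • v i = ψ i • v i := fun i =>
          congrFun (congrArg Subtype.val (congrArg Subtype.val h)) i
        have h1 : (fun i => (ψ i)⁻¹ * φ i) = 1 := by
          refine hfree w₀ (hpv i₀) _ fun i => ?_
          show ((ψ i)⁻¹ * φ i) • v i = v i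
          rw [mul_smul, hc i, inv_smul_smul]
        funext i
        have := congrFun h1 i
        simpa [eq_comm, inv_mul_eq_one] using this
      · rintro ⟨w, hw⟩
        have : ∀ i, π i (w.1 i) = π i (v i) := fun i =>
          (w.2 i i₀).trans (hw.trans (hpv i).symm)
        choose φ hφ using fun i => (hfib i _ _).1 (this i)
        refine ⟨φ, ?_⟩
        apply Subtype.ext
        apply Subtype.ext
        funext i
        exact hφ i
    rw [Nat.card_congr (Equiv.ofBijective e hbij).symm, Nat.card_pi]
end

section
/- For i = 1, …, k let Γᵢ be a finite group acting continuously on a Hausdorff topological space W̃ᵢ, and let πᵢ : W̃ᵢ → X be a continuous open map into a topological space X that is Γᵢ-invariant and whose fibers are exactly the Γᵢ-orbits; set Wᵢ = πᵢ(W̃ᵢ) and W_I = ∩ᵢ₌₁ᵏ Wᵢ. Assume free points are compatible over W_I: for every u ∈ W_I and all indices i, j ∈ {1, …, k}, if some point of πᵢ⁻¹(u) has trivial Γᵢ-stabilizer then every point of π_j⁻¹(u) has trivial Γ_j-stabilizer. Let J be a nonempty proper subset of {1, …, k} and π^I_J : W̃_I → W̃_J the projection forgetting the coordinates outside J. Then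 for every point ũ_J in the image of π^I_J all of whose coordinates have trivial stabilizer, the fiber (π^I_J)⁻¹(ũ_J) has exactly ∏_{i ∉ J} |Γᵢ| = |Γ_I|/|Γ_J| elements. -/
/-- **Proposition 2.18 (iv)** for partial projections. For `i ∈ ι` (finite) let a finite group
`Γᵢ` act continuously on a Hausdorff space `Wᵢ`, and let `πᵢ : Wᵢ → X` be a continuous, open,
`Γᵢ`-invariant map whose fibers are exactly the `Γᵢ`-orbits. Assume that free points are
compatible over `W_I`. Let `J` be a nonempty proper subset of the index set and
`π^I_J : W̃_I → W̃_J` the coordinate projection. Then for every point of the image of `π^I_J`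
(given by restricting a full tuple `w₀ ∈ W̃_I` to `J`) all of whose coordinates have trivial
stabilizer, the fiber of `π^I_J` over it has exactly `∏_{i ∉ J} |Γᵢ| = |Γ_I|/|Γ_J|` elements. -/
theorem fiber_count_of_partial_projection
    {ι : Type*} [Fintype ι] [DecidableEq ι] {X : Type*} [TopologicalSpace X]
    (W : ι → Type*) [∀ i, TopologicalSpace (W i)] [∀ i, T2Space (W i)]
    (Γ : ι → Type*) [∀ i, Group (Γ i)] [∀ i, Finite (Γ i)]
    [∀ i, MulAction (Γ i) (W i)] [∀ i, ContinuousConstSMul (Γ i) (W i)]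
    (π : ∀ i, W i → X) (hcont : ∀ i, Continuous (π i)) (hopen : ∀ i, IsOpenMap (π i))
    (hinv : ∀ i (g : Γ i) (w : W i), π i (g • w) = π i w)
    (hfib : ∀ i (w w' : W i), π i w = π i w' ↔ ∃ g : Γ i, g • w' = w)
    (hcompat : ∀ u ∈ ⋂ i, Set.range (π i), ∀ i j : ι,
      (∃ w : W i, π i w = u ∧ ∀ g : Γ i, g • w = w → g = 1) →
        ∀ w' : W j, π j w' = u → ∀ g : Γ j, g • w' = w' → g = 1)
    (J : Finset ι) (hJne : J.Nonempty) (hJproper : J ≠ Finset.univ)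
    (w₀ : FiberProd W π)
    (hfree : ∀ j ∈ J, ∀ g : Γ j, g • w₀.1 j = w₀.1 j → g = 1) :
    Nat.card { w : FiberProd W π // ∀ j ∈ J, w.1 j = w₀.1 j } =
      ∏ i ∈ Jᶜ, Nat.card (Γ i) := by

  classical
  obtain ⟨j₀, hj₀⟩ := hJne
  set u := π j₀ (w₀.1 j₀) with hu_def
  have hu : ∀ i, π i (w₀.1 i) = u := fun i => w₀.2 i j₀
  have humem : u ∈ ⋂ i, Set.range (π i) := Set.mem_iInter.2 fun i => ⟨w₀.1 i, hu i⟩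
  have free : ∀ (i : ι) (v : W i), π i v = u → ∀ g : Γ i, g • v = v → g = 1 := fun i v hv =>
    hcompat u humem j₀ i ⟨w₀.1 j₀, rfl, hfree j₀ hj₀⟩ v hv
  have exu : ∀ (i : ι) (v : W i), π i v = u → ∃! g : Γ i, g • w₀.1 i = v := by
    intro i v hv
    obtain ⟨g, hg⟩ := (hfib i v (w₀.1 i)).1 (hv.trans (hu i).symm)
    refine ⟨g, hg, fun g' hg' => ?_⟩
    have h2 : (g⁻¹ * g') • w₀.1 i = w₀.1 i := by
      rw [mul_smul, hg', ← hg, inv_smul_smul]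
    have h1 := free i (w₀.1 i) (hu i) _ h2
    exact (inv_mul_eq_one.1 h1).symm
  have key : ∀ (w : { w : FiberProd W π // ∀ j ∈ J, w.1 j = w₀.1 j }) (i : ι),
      π i (w.1.1 i) = u := fun w i => (w.1.2 i j₀).trans (by rw [w.2 j₀ hj₀])
  have hf : ∀ (g : ∀ i : ↥(Jᶜ), Γ i) (i : ι),
      π i (if h : i ∈ J then w₀.1 i else (g ⟨i, Finset.mem_compl.2 h⟩) • w₀.1 i) = u := by
    intro g i
    by_cases h : i ∈ J <;> simp [h, hinv, hu i]
  let e : { w : FiberProd W π // ∀ j ∈ J, w.1 j = w₀.1 j } ≃ ∀ i : ↥(Jᶜ), Γ i :=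
    { toFun := fun w i => (exu i.1 (w.1.1 i.1) (key w i.1)).choose
      invFun := fun g =>
        ⟨⟨fun i => if h : i ∈ J then w₀.1 i else (g ⟨i, Finset.mem_compl.2 h⟩) • w₀.1 i,
          fun i j => (hf g i).trans (hf g j).symm⟩, fun j hj => by simp [hj]⟩
      left_inv := by
        intro w
        refine Subtype.ext (Subtype.ext (funext fun i => ?_))
        by_cases h : i ∈ J
        · simp [h, (w.2 i h).symm]
        · simpa [h] using (exu i (w.1.1 i) (key w i)).choose_spec.1
      right_inv := by
        intro g
        funext i
        dsimp only
        have hi : i.1 ∉ J := Finset.mem_compl.1 i.2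
        exact ((exu i.1 _ (hf g i.1)).choose_spec.2 (g i) (by simp [hi])).symm
    }
  rw [Nat.card_congr e, Nat.card_pi, Finset.prod_coe_sort Jᶜ (fun i => Nat.card (Γ i))]
end

section
/- Let X be a topological space, n ≥ 2 an integer, and W₁, …, W_n open subsets of X with ∩ᵢ₌₁ⁿ Wᵢ = ∅. For i = 1, …, n and j = 1, …, n−1 let Wᵢʲ and Uᵢʲ be open sets with Wᵢʲ ⊂⊂ Uᵢʲ for all j and Uᵢ¹ ⊂⊂ Wᵢ² ⊂⊂ Uᵢ² ⊂⊂ ⋯ ⊂⊂ Wᵢⁿ⁻¹ ⊂⊂ Uᵢⁿ⁻¹ ⊂⊂ Wᵢ. Let 𝒩 be the collection of nonempty subsets I ⊆ {1, …, n} with W_I := ∩_{i∈I} Wᵢ ≠ ∅, and for I ∈ 𝒩 with |I| = k define V_I := (∩_{i∈I} Wᵢᵏ) \ (∪_{J ⊆ {1,…,n}, |J| > k} ∩_{j∈J} Cl(U_jᵏ)). Then: (i) each V_I is open and V_I ⊆ W_I; (ii) the family {V_I : I ∈ 𝒩} covers ∪ᵢ₌₁ⁿ Wᵢ¹; (iii)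 for I, J ∈ 𝒩, if Cl(V_I) ∩ V_J ≠ ∅ then I ⊆ J or J ⊆ I. -/
open Set

/-- The set `V_I` of the Liu–Tian renormalization construction (formula (2.65) of the paper):
for a finite index set `I` with `k = |I|`,
`V_I = (⋂_{i ∈ I} Wᵢᵏ) \ ⋃_{|J| > k} ⋂_{j ∈ J} Cl(Uⱼᵏ)`. -/
def renormV {X : Type*} [TopologicalSpace X] {n : ℕ} (W' U' : Fin n → ℕ → Set X)
    (I : Finset (Fin n)) : Set X :=
  (⋂ i ∈ I, W' i I.card) \
    ⋃ (J : Finset (Fin n)) (_ : I.card < J.card), ⋂ j ∈ J, closure (U' j I.card)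

/-!
For `x ∈ ⋃ᵢ Wᵢ¹` compare, level by level, the number `f k` of indices with `x ∈ Wᵢᵏ` and the
number `g k` of indices with `x ∈ Cl(Uᵢᵏ)`. The nesting gives `g k ≤ f (k + 1)`, while
`f 1 ≥ 1` and `g (n - 1) ≤ n - 1` because `⋂ᵢ Wᵢ = ∅`; a discrete intermediate value argument
yields a level `k` with `g k ≤ k ≤ f k`, and any `k` indices with `x ∈ Wᵢᵏ` form an `I` with
`x ∈ V_I`. For (iii), if `I ⊄ J` and `|I| ≤ |J|`, a point of `Cl(V_I) ∩ V_J` lies in `Cl(Uᵢ^{|J|})`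
for all `|I ∪ J| > |J|` indices `i ∈ I ∪ J`, which `V_J` excludes; the case `|J| < |I|` reduces to
this one because `V_J` is open, so `Cl(V_I) ∩ V_J ≠ ∅` forces `V_I ∩ V_J ≠ ∅`.
-/

theorem Nat.exists_le_apply_and_apply_le {f g : ℕ → ℕ} {m : ℕ} (hm : 1 ≤ m) (hf : 1 ≤ f 1)
    (hg : g m ≤ m) (hgf : ∀ k, 1 ≤ k → k < m → g k ≤ f (k + 1)) :
    ∃ k, 1 ≤ k ∧ k ≤ m ∧ k ≤ f k ∧ g k ≤ k := by
  by_contra! h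
  have hfk : ∀ k, 1 ≤ k → k ≤ m → k ≤ f k := by
    intro k hk
    induction k, hk using Nat.le_induction with
    | base => exact fun _ => hf
    | succ k hk ih => exact fun hkm => (h k hk (by omega) (ih (by omega))).trans_le (hgf k hk hkm)
  exact (h m hm le_rfl (hfk m hm le_rfl)).not_ge hg

theorem Finset.card_lt_of_biInter_nonempty {ι X : Type*} [Fintype ι] {W : ι → Set X}
    (hW : ⋂ i, W i = ∅) {I : Finset ι} (hI : (⋂ i ∈ I, W i).Nonempty) :
    I.card < Fintype.card ι := by
  refine I.card_lt_iff_ne_univ.2 fun hIu => ?_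
  obtain ⟨x, hx⟩ := hI
  exact hW.subset (mem_iInter.2 (by simpa [hIu] using hx))

theorem closure_subset_closure_of_chain {X : Type*} [TopologicalSpace X] {U : ℕ → Set X}
    {a b : ℕ} (h : ∀ j, a ≤ j → j < b → closure (U j) ⊆ U (j + 1)) {k l : ℕ} (hak : a ≤ k)
    (hkl : k ≤ l) (hlb : l ≤ b) : closure (U k) ⊆ closure (U l) := by
  induction l, hkl using Nat.le_induction with
  | base => exact subset_rfl
  | succ l hkl ih =>
    exact (ih (by omega)).trans ((h l (by omega) (by omega)).trans subset_closure)

section renormV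

variable {X : Type*} [TopologicalSpace X] {n : ℕ} {W' U' : Fin n → ℕ → Set X}
  {I J K : Finset (Fin n)} {x : X}

theorem renormV_subset_of_mem {i : Fin n} (hi : i ∈ I) : renormV W' U' I ⊆ W' i I.card :=
  fun _ hx => mem_iInter₂.1 hx.1 i hi

theorem notMem_renormV_of_card_lt (hK : I.card < K.card)
    (hx : ∀ i ∈ K, x ∈ closure (U' i I.card)) : x ∉ renormV W' U' I :=
  fun hxI => hxI.2 (mem_iUnion₂.2 ⟨K, hK, mem_iInter₂.2 hx⟩)

theorem isOpen_renormV (hW' : ∀ i ∈ I, IsOpen (W' i I.card)) : IsOpen (renormV W' U' I) :=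
  (isOpen_biInter_finset hW').sdiff <|
    isClosed_iUnion_of_finite fun _ => isClosed_iUnion_of_finite fun _ =>
      isClosed_biInter fun _ _ => isClosed_closure

theorem mem_renormV_of_forall_card_le {k : ℕ} (hI : I.card = k) (hxI : ∀ i ∈ I, x ∈ W' i k)
    (hk : ∀ K : Finset (Fin n), (∀ i ∈ K, x ∈ closure (U' i k)) → K.card ≤ k) :
    x ∈ renormV W' U' I := by
  subst hI
  refine ⟨mem_iInter₂.2 hxI, fun hx => ?_⟩
  obtain ⟨K, hK, hxK⟩ := mem_iUnion₂.1 hx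
  exact hK.not_ge (hk K (mem_iInter₂.1 hxK))

theorem subset_of_mem_closure_renormV_inter
    (hI : ∀ i ∈ I, closure (W' i I.card) ⊆ closure (U' i J.card))
    (hJ : ∀ j ∈ J, W' j J.card ⊆ closure (U' j J.card))
    (hx : x ∈ closure (renormV W' U' I) ∩ renormV W' U' J) : I ⊆ J := by
  by_contra hIJ
  refine notMem_renormV_of_card_lt (K := I ∪ J) (Finset.card_lt_card (right_lt_sup.2 hIJ))
    (fun i hi => ?_) hx.2
  rcases Finset.mem_union.1 hi with hi | hi
  · exact hI i hi (closure_mono (renormV_subset_of_mem hi) hx.1)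
  · exact hJ i hi (renormV_subset_of_mem hi hx.2)

end renormV

theorem Finset.card_mem_Icc_of_biInter_nonempty {X : Type*} {n : ℕ} {W : Fin n → Set X}
    (hW : ⋂ i, W i = ∅) {I : Finset (Fin n)} (hI : I.Nonempty) (hWI : (⋂ i ∈ I, W i).Nonempty) :
    I.card ∈ Set.Icc 1 (n - 1) := by
  have := card_lt_of_biInter_nonempty hW hWI
  rw [Fintype.card_fin] at this
  exact ⟨hI.card_pos, by omega⟩

structure IsNestedChain {X : Type*} [TopologicalSpace X] {n : ℕ} (W : Fin n → Set X)
    (W' U' : Fin n → ℕ → Set X) : Prop where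
  isOpen_W' : ∀ i j, 1 ≤ j → j ≤ n - 1 → IsOpen (W' i j)
  closure_W'_subset : ∀ i j, 1 ≤ j → j ≤ n - 1 → closure (W' i j) ⊆ U' i j
  closure_U'_subset : ∀ i j, 1 ≤ j → j + 1 ≤ n - 1 → closure (U' i j) ⊆ W' i (j + 1)
  closure_U'_top_subset : ∀ i, closure (U' i (n - 1)) ⊆ W i

namespace IsNestedChain

variable {X : Type*} [TopologicalSpace X] {n : ℕ} {W : Fin n → Set X} {W' U' : Fin n → ℕ → Set X}
  {I J : Finset (Fin n)} {i : Fin n} {k l : ℕ}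

theorem closure_U'_mono (h : IsNestedChain W W' U') (hk : 1 ≤ k) (hkl : k ≤ l) (hl : l ≤ n - 1) :
    closure (U' i k) ⊆ closure (U' i l) :=
  closure_subset_closure_of_chain (fun j hj hjn => (h.closure_U'_subset i j hj (by omega)).trans
    (subset_closure.trans (h.closure_W'_subset i (j + 1) (by omega) (by omega)))) hk hkl hl

theorem closure_U'_subset_W (h : IsNestedChain W W' U') (hk : 1 ≤ k) (hkn : k ≤ n - 1) :
    closure (U' i k) ⊆ W i :=
  (h.closure_U'_mono hk hkn le_rfl).trans (h.closure_U'_top_subset i)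

theorem W'_subset_closure_U' (h : IsNestedChain W W' U') (hk : 1 ≤ k) (hkn : k ≤ n - 1) :
    W' i k ⊆ closure (U' i k) :=
  subset_closure.trans ((h.closure_W'_subset i k hk hkn).trans subset_closure)

theorem W'_subset_W (h : IsNestedChain W W' U') (hk : 1 ≤ k) (hkn : k ≤ n - 1) : W' i k ⊆ W i :=
  (h.W'_subset_closure_U' hk hkn).trans (h.closure_U'_subset_W hk hkn)

theorem isOpen_renormV (h : IsNestedChain W W' U') (hI : I.card ∈ Icc 1 (n - 1)) :
    IsOpen (renormV W' U' I) :=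
  _root_.isOpen_renormV fun i _ => h.isOpen_W' i _ hI.1 hI.2

theorem renormV_subset (h : IsNestedChain W W' U') (hI : I.card ∈ Icc 1 (n - 1)) :
    renormV W' U' I ⊆ ⋂ i ∈ I, W i :=
  fun _ hx => mem_iInter₂.2 fun _ hi => h.W'_subset_W hI.1 hI.2 (renormV_subset_of_mem hi hx)

theorem exists_mem_renormV (h : IsNestedChain W W' U') (hn : 2 ≤ n) (hW : ⋂ i, W i = ∅) {x : X}
    (hx : x ∈ ⋃ i, W' i 1) :
    ∃ I : Finset (Fin n), I.Nonempty ∧ (⋂ i ∈ I, W i).Nonempty ∧ x ∈ renormV W' U' I := by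
  classical
  let f k := (Finset.univ.filter fun i => x ∈ W' i k).card
  let g k := (Finset.univ.filter fun i => x ∈ closure (U' i k)).card
  obtain ⟨i₀, hi₀⟩ := mem_iUnion.1 hx
  have hf : 1 ≤ f 1 := Finset.card_pos.2 ⟨i₀, by simpa using hi₀⟩
  have hg : g (n - 1) ≤ n - 1 := by
    have := Finset.card_lt_of_biInter_nonempty hW
      (I := Finset.univ.filter fun i => x ∈ closure (U' i (n - 1))) ⟨x, mem_iInter₂.2 fun i hi =>
      h.closure_U'_subset_W (by omega) le_rfl (Finset.mem_filter.1 hi).2⟩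
    rw [Fintype.card_fin] at this
    exact Nat.le_sub_one_of_lt this
  have hgf : ∀ k, 1 ≤ k → k < n - 1 → g k ≤ f (k + 1) := fun k hk hkn =>
    Finset.card_le_card fun i hi => Finset.mem_filter.2
      ⟨Finset.mem_univ i, h.closure_U'_subset i k hk hkn (Finset.mem_filter.1 hi).2⟩
  obtain ⟨k, hk, hkn, hfk, hgk⟩ := Nat.exists_le_apply_and_apply_le (by omega) hf hg hgf
  obtain ⟨I, hIf, hIk⟩ := Finset.exists_subset_card_eq hfk
  have hxI : ∀ i ∈ I, x ∈ W' i k := fun i hi => (Finset.mem_filter.1 (hIf hi)).2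
  refine ⟨I, Finset.card_pos.1 (by omega), ⟨x, mem_iInter₂.2 fun i hi => h.W'_subset_W hk hkn
    (hxI i hi)⟩, mem_renormV_of_forall_card_le hIk hxI fun K hK => le_trans ?_ hgk⟩
  exact Finset.card_le_card fun i hi => Finset.mem_filter.2 ⟨Finset.mem_univ i, hK i hi⟩

theorem subset_of_card_le (h : IsNestedChain W W' U') (hI : 1 ≤ I.card) (hIJ : I.card ≤ J.card)
    (hJ : J.card ≤ n - 1) {x : X} (hx : x ∈ closure (renormV W' U' I) ∩ renormV W' U' J) :
    I ⊆ J :=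
  subset_of_mem_closure_renormV_inter
    (fun i _ => (h.closure_W'_subset i _ hI (by omega)).trans
      (subset_closure.trans (h.closure_U'_mono hI hIJ hJ)))
    (fun _ _ => h.W'_subset_closure_U' (by omega) hJ) hx

theorem subset_or_subset (h : IsNestedChain W W' U') (hI : I.card ∈ Icc 1 (n - 1))
    (hJ : J.card ∈ Icc 1 (n - 1)) (hIJ : (closure (renormV W' U' I) ∩ renormV W' U' J).Nonempty) :
    I ⊆ J ∨ J ⊆ I := by
  obtain ⟨x, hx⟩ := hIJ
  rcases le_or_gt I.card J.card with hle | hlt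
  · exact .inl (h.subset_of_card_le hI.1 hle hJ.2 hx)
  · obtain ⟨y, hyJ, hyI⟩ := mem_closure_iff.1 hx.1 _ (h.isOpen_renormV hJ) hx.2
    exact .inr (h.subset_of_card_le hJ.1 hlt.le hI.2 ⟨subset_closure hyJ, hyI⟩)

end IsNestedChain

theorem renormalization_covering_general
    {X : Type*} [TopologicalSpace X] {n : ℕ} (hn : 2 ≤ n)
    (W : Fin n → Set X)
    (hWinter : ⋂ i, W i = ∅)
    (W' U' : Fin n → ℕ → Set X)
    (hW'open : ∀ i j, 1 ≤ j → j ≤ n - 1 → IsOpen (W' i j))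
    (hWU : ∀ i j, 1 ≤ j → j ≤ n - 1 → closure (W' i j) ⊆ U' i j)
    (hUW : ∀ i j, 1 ≤ j → j + 1 ≤ n - 1 → closure (U' i j) ⊆ W' i (j + 1))
    (hUtop : ∀ i, closure (U' i (n - 1)) ⊆ W i) :
    (∀ I : Finset (Fin n), I.Nonempty → (⋂ i ∈ I, W i).Nonempty →
        IsOpen (renormV W' U' I) ∧ renormV W' U' I ⊆ ⋂ i ∈ I, W i) ∧
      (∀ x ∈ ⋃ i, W' i 1,
        ∃ I : Finset (Fin n), I.Nonempty ∧ (⋂ i ∈ I, W i).Nonempty ∧ x ∈ renormV W' U' I) ∧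
      ∀ I J : Finset (Fin n), I.Nonempty → (⋂ i ∈ I, W i).Nonempty →
        J.Nonempty → (⋂ i ∈ J, W i).Nonempty →
        (closure (renormV W' U' I) ∩ renormV W' U' J).Nonempty → I ⊆ J ∨ J ⊆ I := by
  have h : IsNestedChain W W' U' := ⟨hW'open, hWU, hUW, hUtop⟩
  have hcard := fun I hI hWI => Finset.card_mem_Icc_of_biInter_nonempty hWinter (I := I) hI hWI
  exact ⟨fun I hI hWI => ⟨h.isOpen_renormV (hcard I hI hWI), h.renormV_subset (hcard I hI hWI)⟩,
    fun x hx => h.exists_mem_renormV hn hWinter hx,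
    fun I J hI hWI hJ hWJ => h.subset_or_subset (hcard I hI hWI) (hcard J hJ hWJ)⟩

/-- **Lemma 2.31** (the renormalization covering lemma of Liu–Tian). Let `W₁, …, W_n` (`n ≥ 2`)
be open subsets of a topological space `X` with `⋂ᵢ Wᵢ = ∅`, and let
`Wᵢʲ ⊂⊂ Uᵢʲ`, `Uᵢ¹ ⊂⊂ Wᵢ² ⊂⊂ Uᵢ² ⊂⊂ ⋯ ⊂⊂ Wᵢⁿ⁻¹ ⊂⊂ Uᵢⁿ⁻¹ ⊂⊂ Wᵢ` be nested open sets.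
Then, with `𝒩` the collection of nonempty `I` with `W_I = ⋂_{i ∈ I} Wᵢ ≠ ∅`:
(i) each `V_I` (`I ∈ 𝒩`) is open and `V_I ⊆ W_I`; (ii) `{V_I : I ∈ 𝒩}` covers `⋃ᵢ Wᵢ¹`;
(iii) if `Cl(V_I) ∩ V_J ≠ ∅` for `I, J ∈ 𝒩` then `I ⊆ J` or `J ⊆ I`. -/
theorem renormalization_covering
    {X : Type*} [TopologicalSpace X] {n : ℕ} (hn : 2 ≤ n)
    (W : Fin n → Set X) (hWopen : ∀ i, IsOpen (W i))
    (hWinter : ⋂ i, W i = ∅)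
    (W' U' : Fin n → ℕ → Set X)
    (hW'open : ∀ i j, 1 ≤ j → j ≤ n - 1 → IsOpen (W' i j))
    (hU'open : ∀ i j, 1 ≤ j → j ≤ n - 1 → IsOpen (U' i j))
    (hWU : ∀ i j, 1 ≤ j → j ≤ n - 1 → closure (W' i j) ⊆ U' i j)
    (hUW : ∀ i j, 1 ≤ j → j + 1 ≤ n - 1 → closure (U' i j) ⊆ W' i (j + 1))
    (hUtop : ∀ i, closure (U' i (n - 1)) ⊆ W i) :
    (∀ I : Finset (Fin n), I.Nonempty → (⋂ i ∈ I, W i).Nonempty →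
        IsOpen (renormV W' U' I) ∧ renormV W' U' I ⊆ ⋂ i ∈ I, W i) ∧
      (∀ x ∈ ⋃ i, W' i 1,
        ∃ I : Finset (Fin n), I.Nonempty ∧ (⋂ i ∈ I, W i).Nonempty ∧ x ∈ renormV W' U' I) ∧
      ∀ I J : Finset (Fin n), I.Nonempty → (⋂ i ∈ I, W i).Nonempty →
        J.Nonempty → (⋂ i ∈ J, W i).Nonempty →
        (closure (renormV W' U' I) ∩ renormV W' U' J).Nonempty → I ⊆ J ∨ J ⊆ I :=
  renormalization_covering_general hn W hWinter W' U' hW'open hWU hUW hUtop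
end

section
/- Let G and H be real Banach spaces and A : G → H a Fredholm operator. Suppose H = H₁ ⊕ H₂ is a topological direct sum of closed subspaces H₁ and H₂, with continuous projections Pᵢ : H → Hᵢ, and set Aᵢ = Pᵢ ∘ A for i = 1, 2. If A₂ : G → H₂ is surjective, then the operator à : Ker(A₂) → H₁, x ↦ A(x), defined on the closed subspace Ker(A₂) = A⁻¹(H₁) of G, is a bounded linear Fredholm operator with Index(Ã) = Index(A). -/
open Submodule

theorem Submodule.mkQ_comp_subtype_surjective {R M : Type*} [Ring R] [AddCommGroup M]
    [Module R M] {p q : Submodule R M} (h : Codisjoint p q) :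
    Function.Surjective (p.mkQ ∘ₗ q.subtype) := by
  rw [← LinearMap.range_eq_top, LinearMap.range_comp, range_subtype, map_mkQ_eq_top]
  exact h.eq_top

theorem LinearMap.codisjoint_range_ker_of_surjective_comp {R E F M : Type*} [Ring R]
    [AddCommGroup E] [Module R E] [AddCommGroup F] [Module R F] [AddCommGroup M] [Module R M]
    (A : E →ₗ[R] F) (f : F →ₗ[R] M) (h : Function.Surjective (f ∘ₗ A)) :
    Codisjoint (range A) (ker f) := by
  have hf : Function.Surjective f := .of_comp h
  rw [← map_eq_range_iff, ← range_comp, range_eq_top.mpr h, range_eq_top.mpr hf]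

namespace ContinuousLinearMap

variable {R E F : Type*} [Ring R] [AddCommGroup E] [Module R E] [TopologicalSpace E]
  [AddCommGroup F] [Module R F] [TopologicalSpace F]

def restrictPreimage (A : E →L[R] F) (V : Submodule R F) :
    V.comap (A : E →ₗ[R] F) →L[R] V :=
  (A.comp (V.comap (A : E →ₗ[R] F)).subtypeL).codRestrict V fun x => x.2

variable (A : E →L[R] F) (V : Submodule R F)

theorem ker_restrictPreimage :
    LinearMap.ker (A.restrictPreimage V).toLinearMap =
      (LinearMap.ker (A : E →ₗ[R] F)).comap (V.comap (A : E →ₗ[R] F)).subtype := by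
  ext x
  exact Subtype.ext_iff

noncomputable def kerRestrictPreimageEquiv :
    LinearMap.ker (A.restrictPreimage V).toLinearMap ≃ₗ[R] LinearMap.ker (A : E →ₗ[R] F) :=
  (LinearEquiv.ofEq _ _ (A.ker_restrictPreimage V)).trans
    (comapSubtypeEquivOfLe (LinearMap.ker_le_comap _))

theorem range_restrictPreimage :
    LinearMap.range (A.restrictPreimage V).toLinearMap =
      (LinearMap.range (A : E →ₗ[R] F)).comap V.subtype := by
  ext y
  constructor
  · rintro ⟨x, rfl⟩
    exact ⟨x, rfl⟩
  · rintro ⟨x, hx⟩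
    exact ⟨⟨x, show A x ∈ V from hx ▸ y.2⟩, Subtype.ext hx⟩

theorem isClosed_range_restrictPreimage
    (h : IsClosed (LinearMap.range (A : E →ₗ[R] F) : Set F)) :
    IsClosed (LinearMap.range (A.restrictPreimage V).toLinearMap : Set V) := by
  rw [range_restrictPreimage]
  exact h.preimage continuous_subtype_val

noncomputable def quotRangeRestrictPreimageEquiv
    (hV : Codisjoint (LinearMap.range (A : E →ₗ[R] F)) V) :
    (V ⧸ LinearMap.range (A.restrictPreimage V).toLinearMap) ≃ₗ[R]
      F ⧸ LinearMap.range (A : E →ₗ[R] F) :=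
  (quotEquivOfEq _ _ (by rw [range_restrictPreimage, LinearMap.ker_comp, ker_mkQ])).trans
    (LinearMap.quotKerEquivOfSurjective _ (mkQ_comp_subtype_surjective hV))

end ContinuousLinearMap

section Fredholm

variable {E F : Type*} [AddCommGroup E] [Module ℝ E] [TopologicalSpace E]
  [AddCommGroup F] [Module ℝ F] [TopologicalSpace F] {A : E →L[ℝ] F} {V : Submodule ℝ F}

theorem IsFredholm.restrictPreimage (hA : IsFredholm A)
    (hV : Codisjoint (LinearMap.range (A : E →ₗ[ℝ] F)) V) :
    IsFredholm (A.restrictPreimage V) := by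
  obtain ⟨hker, hrange, hcoker⟩ := hA
  exact ⟨.equiv (A.kerRestrictPreimageEquiv V).symm, A.isClosed_range_restrictPreimage V hrange,
    .equiv (A.quotRangeRestrictPreimageEquiv V hV).symm⟩

theorem fredholmIndex_restrictPreimage (hV : Codisjoint (LinearMap.range (A : E →ₗ[ℝ] F)) V) :
    fredholmIndex (A.restrictPreimage V) = fredholmIndex A := by
  rw [fredholmIndex, fredholmIndex, (A.kerRestrictPreimageEquiv V).finrank_eq,
    (A.quotRangeRestrictPreimageEquiv V hV).finrank_eq]

end Fredholm

theorem fredholm_restrict_preimage_of_proj_surjective_general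
    {G H : Type*} [NormedAddCommGroup G] [NormedSpace ℝ G]
    [NormedAddCommGroup H] [NormedSpace ℝ H]
    (A : G →L[ℝ] H) (hA : IsFredholm A)
    (H₁ H₂ : Submodule ℝ H)
    (hcompl : IsCompl H₁ H₂)
    (hsurj : ∀ y : H₂, ∃ x : G,
      Submodule.linearProjOfIsCompl H₂ H₁ hcompl.symm (A x) = y) :
    IsFredholm ((A.comp (Submodule.comap (A : G →ₗ[ℝ] H) H₁).subtypeL).codRestrict H₁
        (fun x => x.2)) ∧
      fredholmIndex ((A.comp (Submodule.comap (A : G →ₗ[ℝ] H) H₁).subtypeL).codRestrict H₁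
        (fun x => x.2)) = fredholmIndex A := by
  have hV : Codisjoint (LinearMap.range (A : G →ₗ[ℝ] H)) H₁ := by
    simpa using LinearMap.codisjoint_range_ker_of_surjective_comp (A : G →ₗ[ℝ] H)
      (projectionOnto H₂ H₁ hcompl.symm) hsurj
  exact ⟨hA.restrictPreimage hV, fredholmIndex_restrictPreimage hV⟩

/-- **Proposition C.3.** Let `G`, `H` be real Banach spaces, `A : G → H` Fredholm, and
`H = H₁ ⊕ H₂` a topological direct sum of closed subspaces, with projections `Pᵢ` and
`Aᵢ = Pᵢ ∘ A`. If `A₂ : G → H₂` is surjective, then `Ã : Ker A₂ = A⁻¹(H₁) → H₁`, `x ↦ A x`,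
is a bounded linear Fredholm operator with `Index Ã = Index A`. -/
theorem fredholm_restrict_preimage_of_proj_surjective
    {G H : Type*} [NormedAddCommGroup G] [NormedSpace ℝ G] [CompleteSpace G]
    [NormedAddCommGroup H] [NormedSpace ℝ H] [CompleteSpace H]
    (A : G →L[ℝ] H) (hA : IsFredholm A)
    (H₁ H₂ : Submodule ℝ H) (hH₁ : IsClosed (H₁ : Set H)) (hH₂ : IsClosed (H₂ : Set H))
    (hcompl : IsCompl H₁ H₂)
    (hsurj : ∀ y : H₂, ∃ x : G,
      Submodule.linearProjOfIsCompl H₂ H₁ hcompl.symm (A x) = y) :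
    IsFredholm ((A.comp (Submodule.comap (A : G →ₗ[ℝ] H) H₁).subtypeL).codRestrict H₁
        (fun x => x.2)) ∧
      fredholmIndex ((A.comp (Submodule.comap (A : G →ₗ[ℝ] H) H₁).subtypeL).codRestrict H₁
        (fun x => x.2)) = fredholmIndex A :=
  fredholm_restrict_preimage_of_proj_surjective_general A hA H₁ H₂ hcompl hsurj
end
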